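/- arXiv:2512.11462 — 4 statements merged into one kernel-verified Lean document; each statement's English description precedes it below -/
import Mathlib

section
/- Let X, Y ∈ M_d(ℂ) and define φ_X(Y) := ∫₀¹ e^{-sX} Y e^{sX} ds. Then e^X · φ_X(Y) = ∑_{k,j ≥ 0} X^k Y X^j / (k+j+1)!. -/
/-!
Since `exp X * exp (-s • X) = exp ((1 - s) • X)`, the integrand `exp X * exp (-s • X) * Y *
exp (s • X)` is the double series `∑ (1 - s)^k s^j / (k! j!) • X^k Y X^j`, whose terms are bounded
uniformly on `[0, 1]` by the absolutely summable terms of `exp ‖X‖ * ‖Y‖ * exp ‖X‖`. Dominated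
convergence lets us integrate termwise, and the Beta integral
`∫₀¹ (1 - s)^k s^j ds = k! j! / (k + j + 1)!` produces the coefficients.
-/

open scoped Nat
open NormedSpace intervalIntegral

theorem integral_one_sub_pow_mul_pow (k j : ℕ) :
    ∫ x in (0 : ℝ)..1, (1 - x) ^ k * x ^ j = k ! * j ! / (k + j + 1)! := by
  have hβ := Complex.betaIntegral_eq_Gamma_mul_div (j + 1) (k + 1)
    (by norm_cast; omega) (by norm_cast; omega)
  rw [show (j + 1 + (k + 1) : ℂ) = (k + j + 1 : ℕ) + 1 by push_cast; ring,
    Complex.Gamma_nat_eq_factorial, Complex.Gamma_nat_eq_factorial,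
    Complex.Gamma_nat_eq_factorial, Complex.betaIntegral] at hβ
  apply Complex.ofReal_injective
  rw [← intervalIntegral.integral_ofReal]
  push_cast
  convert hβ using 1
  · refine intervalIntegral.integral_congr fun x _ => ?_
    simp only [add_sub_cancel_right, Complex.cpow_natCast]
    ring
  · ring

theorem norm_one_sub_pow_mul_pow_le_one {s : ℝ} (hs0 : 0 ≤ s) (hs1 : s ≤ 1) (k j : ℕ) :
    ‖(1 - s) ^ k * s ^ j‖ ≤ 1 := by
  have hs1' : 0 ≤ 1 - s := sub_nonneg.2 hs1
  rw [Real.norm_of_nonneg (mul_nonneg (pow_nonneg hs1' k) (pow_nonneg hs0 j))]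
  exact mul_le_one₀ (pow_le_one₀ hs1' (by linarith)) (pow_nonneg hs0 j) (pow_le_one₀ hs0 hs1)

section NormedRing

variable {R ι κ : Type*} [NormedRing R]

theorem Summable.norm_mul_mul {f : ι → R} {g : κ → R} (hf : Summable fun i => ‖f i‖)
    (hg : Summable fun j => ‖g j‖) (y : R) :
    Summable fun p : ι × κ => ‖f p.1 * y * g p.2‖ :=
  Summable.mul_norm (f := (f · * y))
    (.of_nonneg_of_le (fun _ => norm_nonneg _) (fun _ => norm_mul_le _ _) (hf.mul_right ‖y‖)) hg

theorem HasSum.mul_mul_of_summable_norm [CompleteSpace R] {f : ι → R} {g : κ → R} {a b : R}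
    (hf : HasSum f a) (hg : HasSum g b) (hf' : Summable fun i => ‖f i‖)
    (hg' : Summable fun j => ‖g j‖) (y : R) :
    HasSum (fun p : ι × κ => f p.1 * y * g p.2) (a * y * b) :=
  (hf.mul_right y).mul hg (hf'.norm_mul_mul hg' y).of_norm

end NormedRing

namespace NormedSpace

variable {𝔸 : Type*} [NormedRing 𝔸] [NormedAlgebra ℝ 𝔸] [CompleteSpace 𝔸]

theorem hasSum_exp_smul_mul_mul_exp_smul (a b : ℝ) (X Y : 𝔸) :
    HasSum (fun p : ℕ × ℕ =>
        (a ^ p.1 * b ^ p.2) • (((p.1 ! : ℝ)⁻¹ • X ^ p.1) * Y * ((p.2 ! : ℝ)⁻¹ • X ^ p.2)))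
      (exp (a • X) * Y * exp (b • X)) := by
  convert (exp_series_hasSum_exp' (𝕂 := ℝ) (a • X)).mul_mul_of_summable_norm
    (exp_series_hasSum_exp' (𝕂 := ℝ) (b • X)) (norm_expSeries_summable' _)
    (norm_expSeries_summable' _) Y using 2 with p
  simp only [smul_pow, smul_smul, smul_mul_assoc, mul_smul_comm]
  ring_nf

theorem exp_mul_exp_neg_smul [NormedAlgebra ℚ 𝔸] (X : 𝔸) (s : ℝ) :
    exp X * exp ((-s) • X) = exp ((1 - s) • X) := by
  rw [← exp_add_of_commute ((Commute.refl X).smul_right _), sub_smul, one_smul, neg_smul,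
    sub_eq_add_neg]

theorem hasSum_exp_mul_integral_exp_neg_smul_mul_mul_exp_smul [NormedAlgebra ℚ 𝔸] (X Y : 𝔸) :
    HasSum (fun p : ℕ × ℕ => ((p.1 + p.2 + 1)! : ℝ)⁻¹ • (X ^ p.1 * Y * X ^ p.2))
      (exp X * ∫ s in (0 : ℝ)..1, exp ((-s) • X) * Y * exp (s • X)) := by
  set T : ℕ × ℕ → 𝔸 := fun p => ((p.1 ! : ℝ)⁻¹ • X ^ p.1) * Y * ((p.2 ! : ℝ)⁻¹ • X ^ p.2)
  have hT : Summable fun p => ‖T p‖ :=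
    (norm_expSeries_summable' (𝕂 := ℝ) X).norm_mul_mul (norm_expSeries_summable' X) Y
  have hcont : Continuous fun s : ℝ => exp ((-s) • X) * Y * exp (s • X) := by fun_prop
  rw [← ContinuousLinearMap.mul_apply' ℝ,
    ← (ContinuousLinearMap.mul ℝ 𝔸 (exp X)).intervalIntegral_comp_comm (hcont.intervalIntegrable 0 1)]
  simp only [ContinuousLinearMap.mul_apply', ← mul_assoc, exp_mul_exp_neg_smul]
  have hsum : HasSum (fun p => ∫ s in (0 : ℝ)..1, ((1 - s) ^ p.1 * s ^ p.2) • T p)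
      (∫ s in (0 : ℝ)..1, exp ((1 - s) • X) * Y * exp (s • X)) := by
    refine hasSum_integral_of_dominated_convergence (fun p _ => ‖T p‖) (fun p => by fun_prop)
      (fun p => .of_forall fun s hs => ?_) (.of_forall fun _ _ => hT) intervalIntegrable_const
      (.of_forall fun s _ => hasSum_exp_smul_mul_mul_exp_smul (1 - s) s X Y)
    obtain ⟨hs0, hs1⟩ : 0 < s ∧ s ≤ 1 := by rwa [Set.uIoc_of_le zero_le_one] at hs
    rw [norm_smul]
    exact mul_le_of_le_one_left (norm_nonneg _) (norm_one_sub_pow_mul_pow_le_one hs0.le hs1 _ _)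
  convert hsum using 2 with p
  rw [intervalIntegral.integral_smul_const, integral_one_sub_pow_mul_pow]
  simp only [T, smul_mul_assoc, mul_smul_comm, smul_smul]
  congr 1
  field_simp

end NormedSpace

attribute [local instance] Matrix.linftyOpNormedRing Matrix.linftyOpNormedAlgebra

/-- For `X Y : M_d(ℂ)` and `φ_X(Y) := ∫₀¹ e^{-sX} Y e^{sX} ds`, one has
`e^X * φ_X(Y) = ∑_{k,j≥0} X^k Y X^j / (k+j+1)!`. -/
theorem exp_mul_phi_eq_tsum {d : ℕ} (X Y : Matrix (Fin d) (Fin d) ℂ) :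
    exp X * (∫ s in (0:ℝ)..1, exp ((-s : ℝ) • X) * Y * exp ((s : ℝ) • X)) =
      ∑' p : ℕ × ℕ, ((Nat.factorial (p.1 + p.2 + 1) : ℂ)⁻¹) • (X ^ p.1 * Y * X ^ p.2) := by
  refine (hasSum_exp_mul_integral_exp_neg_smul_mul_mul_exp_smul X Y).tsum_eq.symm.trans
    (tsum_congr fun p => ?_)
  rw [← Complex.coe_smul, Complex.ofReal_inv, Complex.ofReal_natCast]
end

section
/- Let X, Y ∈ M_d(ℂ) and define ψ_X(Y) := ∫₀¹ ∫₀ˢ e^{-sX} Y e^{(s-r)X} Y e^{rX} dr ds. Then e^X · ψ_X(Y) = ∑_{k,j,l ≥ 0} X^k Y X^j Y X^l / (k+j+l+2)!. -/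
open NormedSpace intervalIntegral

attribute [local instance] Matrix.linftyOpNormedRing Matrix.linftyOpNormedAlgebra

/-!
Since `exp X * exp (-s • X) = exp ((1 - s) • X)`, expanding the three exponentials writes the
integrand as `∑ (1 - s)^k (s - r)^j r^l / (k! j! l!) • X^k Y X^j Y X^l`. On the simplex
`0 ≤ r ≤ s ≤ 1` every weight is bounded by `1` and the coefficients are absolutely summable, so
the series can be integrated termwise; two Beta integrals give the Dirichlet integral
`∫₀¹ ∫₀ˢ (1 - s)^k (s - r)^j r^l dr ds = k! j! l! / (k + j + l + 2)!`.
-/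

open scoped Nat

theorem integral_pow_mul_one_sub_pow (a b : ℕ) :
    ∫ x in (0:ℝ)..1, x ^ a * (1 - x) ^ b = a ! * b ! / (a + b + 1)! := by
  have h := Complex.betaIntegral_eq_Gamma_mul_div (a + 1) (b + 1)
    (by simp; positivity) (by simp; positivity)
  rw [Complex.betaIntegral, show (a + 1 : ℂ) + (b + 1) = (a + b + 1 : ℕ) + 1 by push_cast; ring,
    Complex.Gamma_nat_eq_factorial, Complex.Gamma_nat_eq_factorial,
    Complex.Gamma_nat_eq_factorial] at h
  simp only [add_sub_cancel_right] at h
  norm_cast at h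
  rw [← Complex.ofReal_inj, ← integral_ofReal, h]
  push_cast
  rfl

theorem integral_pow_mul_sub_pow (a b : ℕ) (s : ℝ) :
    ∫ r in (0:ℝ)..s, r ^ a * (s - r) ^ b = s ^ (a + b + 1) * (a ! * b ! / (a + b + 1)!) := by
  have h := smul_integral_comp_mul_left (fun r : ℝ => r ^ a * (s - r) ^ b) s (a := 0) (b := 1)
  have scale (u : ℝ) : (s * u) ^ a * (s - s * u) ^ b = s ^ (a + b) * (u ^ a * (1 - u) ^ b) := by
    rw [← mul_one_sub, mul_pow, mul_pow, pow_add]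
    ring
  simp only [mul_zero, mul_one, smul_eq_mul, scale, integral_const_mul,
    integral_pow_mul_one_sub_pow] at h
  rw [← h]
  ring

theorem integral_integral_simplex_monomial (k j l : ℕ) :
    ∫ s in (0:ℝ)..1, ∫ r in (0:ℝ)..s, (1 - s) ^ k * (s - r) ^ j * r ^ l
      = k ! * j ! * l ! / (k + j + l + 2)! := by
  have inner (s : ℝ) : ∫ r in (0:ℝ)..s, (1 - s) ^ k * (s - r) ^ j * r ^ l
      = (l ! * j ! / (l + j + 1)! : ℝ) * (s ^ (l + j + 1) * (1 - s) ^ k) := by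
    simp_rw [mul_assoc, integral_const_mul, mul_comm _ (_ ^ l), integral_pow_mul_sub_pow]
    ring
  simp_rw [inner, integral_const_mul, integral_pow_mul_one_sub_pow,
    show l + j + 1 + k + 1 = k + j + l + 2 by omega]
  field_simp

theorem abs_simplex_monomial_le_one {s r : ℝ} (hr : 0 ≤ r) (hrs : r ≤ s) (hs : s ≤ 1)
    (k j l : ℕ) : |(1 - s) ^ k * (s - r) ^ j * r ^ l| ≤ 1 := by
  have h1s : 0 ≤ 1 - s := by linarith
  have hsr : 0 ≤ s - r := by linarith
  rw [abs_of_nonneg (by positivity)]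
  exact mul_le_one₀ (mul_le_one₀ (pow_le_one₀ h1s (by linarith)) (by positivity)
    (pow_le_one₀ hsr (by linarith))) (by positivity) (pow_le_one₀ hr (by linarith))

section IntervalIntegralTsum

variable {ι E : Type*} [Countable ι] [NormedAddCommGroup E] [NormedSpace ℝ E] [CompleteSpace E]
  {a b : ℝ}

theorem intervalIntegral_tsum_of_norm_le {F : ι → ℝ → E} {u : ι → ℝ} (hF : ∀ i, Continuous (F i))
    (hFu : ∀ i, ∀ x ∈ Set.uIcc a b, ‖F i x‖ ≤ u i) (hu : Summable u) :
    ∫ x in a..b, ∑' i, F i x = ∑' i, ∫ x in a..b, F i x := by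
  have hFu' (x : ℝ) (hx : x ∈ Set.uIoc a b) (i : ι) : ‖F i x‖ ≤ u i :=
    hFu i x (Set.uIoc_subset_uIcc hx)
  refine (hasSum_integral_of_dominated_convergence (fun i _ => u i)
    (fun i => (hF i).aestronglyMeasurable) (fun i => .of_forall fun x hx => hFu' x hx i)
    (.of_forall fun _ _ => hu) intervalIntegrable_const
    (.of_forall fun x hx => ?_)).tsum_eq.symm
  exact (Summable.of_norm_bounded hu (hFu' x hx)).hasSum

theorem intervalIntegral_tsum_smul {w : ι → ℝ → ℝ} {c : ι → E} (hw : ∀ i, Continuous (w i))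
    (hw_le : ∀ i, ∀ x ∈ Set.uIcc a b, |w i x| ≤ 1) (hc : Summable fun i => ‖c i‖) :
    ∫ x in a..b, ∑' i, w i x • c i = ∑' i, (∫ x in a..b, w i x) • c i := by
  rw [intervalIntegral_tsum_of_norm_le (F := fun i x => w i x • c i)
    (fun i => (hw i).smul continuous_const) (fun i x hx => ?_) hc]
  · simp_rw [intervalIntegral.integral_smul_const]
  · rw [norm_smul, Real.norm_eq_abs]
    exact mul_le_of_le_one_left (norm_nonneg _) (hw_le i x hx)

end IntervalIntegralTsum

section TripleProduct

variable {R : Type*} [NormedRing R] {ι ι' ι'' : Type*} {f : ι → R} {g : ι' → R} {h : ι'' → R}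

theorem summable_norm_mul_mul (hf : Summable fun n => ‖f n‖) (hg : Summable fun n => ‖g n‖)
    (hh : Summable fun n => ‖h n‖) :
    Summable fun p : ι × ι' × ι'' => ‖f p.1 * g p.2.1 * h p.2.2‖ := by
  have hsum := (Equiv.prodAssoc ι ι' ι'').symm.summable_iff.2 ((hf.mul_norm hg).mul_norm hh)
  exact hsum

theorem tsum_mul_tsum_mul_tsum_of_summable_norm [CompleteSpace R]
    (hf : Summable fun n => ‖f n‖) (hg : Summable fun n => ‖g n‖)
    (hh : Summable fun n => ‖h n‖) :
    (∑' n, f n) * (∑' n, g n) * (∑' n, h n) = ∑' p : ι × ι' × ι'', f p.1 * g p.2.1 * h p.2.2 := by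
  rw [tsum_mul_tsum_of_summable_norm hf hg, tsum_mul_tsum_of_summable_norm (hf.mul_norm hg) hh]
  exact (Equiv.prodAssoc ι ι' ι'').tsum_eq fun p => f p.1 * g p.2.1 * h p.2.2

end TripleProduct

section BanachAlgebra

variable {𝔸 : Type*} [NormedRing 𝔸] [NormedAlgebra ℝ 𝔸]

theorem IntervalIntegrable.integral_const_mul {f : ℝ → 𝔸} {a b : ℝ}
    (hf : IntervalIntegrable f MeasureTheory.volume a b) (c : 𝔸) :
    ∫ x in a..b, c * f x = c * ∫ x in a..b, f x :=
  hf.integral_smul c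

noncomputable def tripleWordCoeff (X Y : 𝔸) (p : ℕ × ℕ × ℕ) : 𝔸 :=
  (p.1 ! * p.2.1 ! * p.2.2 ! : ℝ)⁻¹ • (X ^ p.1 * Y * X ^ p.2.1 * Y * X ^ p.2.2)

theorem expSeries_terms_mul_mul_eq_smul_tripleWordCoeff (a b c : ℝ) (X Y : 𝔸) (p : ℕ × ℕ × ℕ) :
    ((p.1 !⁻¹ : ℝ) • (a • X) ^ p.1 * Y) * ((p.2.1 !⁻¹ : ℝ) • (b • X) ^ p.2.1 * Y) *
        ((p.2.2 !⁻¹ : ℝ) • (c • X) ^ p.2.2)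
      = (a ^ p.1 * b ^ p.2.1 * c ^ p.2.2) • tripleWordCoeff X Y p := by
  simp only [tripleWordCoeff, smul_pow, smul_mul_assoc, mul_smul_comm, smul_smul, mul_assoc]
  congr 1
  ring

theorem summable_norm_expSeries_mul (t : ℝ) (X Y : 𝔸) :
    Summable fun n => ‖(n !⁻¹ : ℝ) • (t • X) ^ n * Y‖ :=
  ((norm_expSeries_summable' (𝕂 := ℝ) (t • X)).mul_right ‖Y‖).of_nonneg_of_le
    (fun _ => norm_nonneg _) fun _ => norm_mul_le _ _

theorem summable_norm_tripleWordCoeff (X Y : 𝔸) : Summable fun p => ‖tripleWordCoeff X Y p‖ :=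
  (summable_norm_mul_mul (summable_norm_expSeries_mul 1 X Y) (summable_norm_expSeries_mul 1 X Y)
    (norm_expSeries_summable' (𝕂 := ℝ) ((1 : ℝ) • X))).congr fun p => by
      rw [expSeries_terms_mul_mul_eq_smul_tripleWordCoeff]
      simp

variable [CompleteSpace 𝔸]

theorem exp_mul_exp_smul (X : 𝔸) (t : ℝ) : exp X * exp (t • X) = exp ((1 + t) • X) := by
  -- `exp` itself does not depend on the choice of `ℚ`-algebra structure
  let _ := NormedAlgebra.restrictScalars ℚ ℝ 𝔸
  rw [add_smul, one_smul, exp_add_of_commute ((Commute.refl X).smul_right t)]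

theorem exp_smul_mul_exp_smul_mul_exp_smul (a b c : ℝ) (X Y : 𝔸) :
    exp (a • X) * Y * exp (b • X) * Y * exp (c • X)
      = ∑' p, (a ^ p.1 * b ^ p.2.1 * c ^ p.2.2) • tripleWordCoeff X Y p := by
  have exp_mul (t : ℝ) : exp (t • X) * Y = ∑' n, (n !⁻¹ : ℝ) • (t • X) ^ n * Y := by
    rw [← (exp_series_hasSum_exp' (𝕂 := ℝ) (t • X)).tsum_eq]
    exact ((norm_expSeries_summable' (𝕂 := ℝ) (t • X)).of_norm.tsum_mul_right Y).symm
  rw [mul_assoc _ (exp (b • X)), exp_mul, exp_mul,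
    ← (exp_series_hasSum_exp' (𝕂 := ℝ) (c • X)).tsum_eq,
    tsum_mul_tsum_mul_tsum_of_summable_norm (summable_norm_expSeries_mul a X Y)
      (summable_norm_expSeries_mul b X Y) (norm_expSeries_summable' (𝕂 := ℝ) (c • X))]
  exact tsum_congr (expSeries_terms_mul_mul_eq_smul_tripleWordCoeff a b c X Y)

theorem exp_mul_integral_integral_exp_smul (X Y : 𝔸) :
    exp X * ∫ s in (0:ℝ)..1, ∫ r in (0:ℝ)..s,
        exp ((-s) • X) * Y * exp ((s - r) • X) * Y * exp (r • X)
      = ∫ s in (0:ℝ)..1, ∫ r in (0:ℝ)..s,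
        exp ((1 - s) • X) * Y * exp ((s - r) • X) * Y * exp (r • X) := by
  have hG : Continuous (Function.uncurry fun s r : ℝ =>
      exp ((-s) • X) * Y * exp ((s - r) • X) * Y * exp (r • X)) := by
    let _ := NormedAlgebra.restrictScalars ℚ ℝ 𝔸
    have := exp_continuous (𝔸 := 𝔸)
    fun_prop
  rw [← ((continuous_parametric_intervalIntegral_of_continuous hG
    continuous_id').intervalIntegrable 0 1).integral_const_mul]
  refine integral_congr fun s _ => ?_
  rw [← ((hG.uncurry_left s).intervalIntegrable 0 s).integral_const_mul]
  simp only [← mul_assoc, exp_mul_exp_smul, ← sub_eq_add_neg]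

theorem integral_integral_exp_smul_mul_exp_smul_mul_exp_smul (X Y : 𝔸) :
    ∫ s in (0:ℝ)..1, ∫ r in (0:ℝ)..s, exp ((1 - s) • X) * Y * exp ((s - r) • X) * Y * exp (r • X)
      = ∑' p, (∫ s in (0:ℝ)..1, ∫ r in (0:ℝ)..s, (1 - s) ^ p.1 * (s - r) ^ p.2.1 * r ^ p.2.2) •
          tripleWordCoeff X Y p := by
  have hc := summable_norm_tripleWordCoeff X Y
  simp_rw [exp_smul_mul_exp_smul_mul_exp_smul]
  calc _ = ∫ s in (0:ℝ)..1, ∑' p : ℕ × ℕ × ℕ,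
        (∫ r in (0:ℝ)..s, (1 - s) ^ p.1 * (s - r) ^ p.2.1 * r ^ p.2.2) • tripleWordCoeff X Y p := by
        refine integral_congr fun s hs => intervalIntegral_tsum_smul (fun _ => by fun_prop)
          (fun p r hr => ?_) hc
        rw [Set.uIcc_of_le zero_le_one] at hs
        rw [Set.uIcc_of_le hs.1] at hr
        exact abs_simplex_monomial_le_one hr.1 hr.2 hs.2 _ _ _
    _ = _ := by
        refine intervalIntegral_tsum_smul
          (fun _ => continuous_parametric_intervalIntegral_of_continuous (by fun_prop)
            continuous_id) (fun p s hs => ?_) hc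
        rw [Set.uIcc_of_le zero_le_one] at hs
        rw [← Real.norm_eq_abs]
        calc _ ≤ 1 * |s - 0| := norm_integral_le_of_norm_le_const fun r hr => by
              rw [Set.uIoc_of_le hs.1] at hr
              exact abs_simplex_monomial_le_one hr.1.le hr.2 hs.2 _ _ _
          _ ≤ 1 := by rw [sub_zero, abs_of_nonneg hs.1, one_mul]; exact hs.2

end BanachAlgebra

/-- For `X Y : M_d(ℂ)` and
`ψ_X(Y) := ∫₀¹ ∫₀ˢ e^{-sX} Y e^{(s-r)X} Y e^{rX} dr ds`, one has
`e^X * ψ_X(Y) = ∑_{k,j,l ≥ 0} X^k Y X^j Y X^l / (k+j+l+2)!`. -/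
theorem exp_mul_psi_eq_tsum {d : ℕ} (X Y : Matrix (Fin d) (Fin d) ℂ) :
    exp X *
        (∫ s in (0:ℝ)..1, ∫ r in (0:ℝ)..s,
          exp ((-s : ℝ) • X) * Y * exp (((s - r : ℝ)) • X) * Y * exp ((r : ℝ) • X)) =
      ∑' p : ℕ × ℕ × ℕ,
        ((Nat.factorial (p.1 + p.2.1 + p.2.2 + 2) : ℂ)⁻¹) •
          (X ^ p.1 * Y * X ^ p.2.1 * Y * X ^ p.2.2) := by
  refine (exp_mul_integral_integral_exp_smul X Y).trans ?_
  refine (integral_integral_exp_smul_mul_exp_smul_mul_exp_smul X Y).trans ?_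
  refine tsum_congr fun p => ?_
  rw [integral_integral_simplex_monomial, tripleWordCoeff, smul_smul, ← Complex.coe_smul]
  congr 1
  push_cast
  rw [div_mul_eq_mul_div, mul_inv_cancel₀ (by simp [Nat.factorial_ne_zero]), one_div]
end

section
/- Let X, Y, Z ∈ M_d(ℂ). Then, as ε → 0, exp(X + εY + ε²Z) = e^X · (I + ε φ_X(Y) + ε² (φ_X(Z) + ψ_X(Y))) + O(ε³), where φ_X(Y) = ∫₀¹ e^{-sX} Y e^{sX} ds and ψ_X(Y) = ∫₀¹∫₀ˢ e^{-sX} Y e^{(s-r)X} Y e^{rX} dr ds. -/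
open scoped Matrix
open NormedSpace intervalIntegral

attribute [local instance] Matrix.linftyOpNormedRing Matrix.linftyOpNormedAlgebra

/-!
Duhamel's formula `e^{-sX} e^{s(X+B)} = 1 + ∫₀ˢ e^{-rX} B e^{r(X+B)} dr`, applied twice, gives
`e^{X+B} = e^X (1 + ∫₀¹ e^{-sX} B e^{sX} ds + ∫₀¹ ∫₀ˢ e^{-sX} B e^{(s-r)X} B e^{r(X+B)} dr ds)`.
For `B = εY + ε²Z` the single integral is exactly `ε φ_X(Y) + ε² φ_X(Z)`, and replacing `B` by `εY`
and `e^{r(X+B)}` by `e^{rX}` in the double integral costs `O(ε³)`, because Duhamel's formula once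
more gives `e^{r(X+B)} - e^{rX} = O(‖B‖)`. The exponentials involved are bounded uniformly in `ε`
by compactness of the parameter range.
-/

open Set

theorem norm_integral_integral_sub_le {E : Type*} [NormedAddCommGroup E] [NormedSpace ℝ E]
    {F G : ℝ → ℝ → E} (hF : Continuous (Function.uncurry F))
    (hG : Continuous (Function.uncurry G)) {C : ℝ}
    (hC : ∀ s r : ℝ, 0 ≤ r → r ≤ s → s ≤ 1 → ‖F s r - G s r‖ ≤ C) :
    ‖(∫ s in (0 : ℝ)..1, ∫ r in (0 : ℝ)..s, F s r) - ∫ s in (0 : ℝ)..1, ∫ r in (0 : ℝ)..s, G s r‖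
      ≤ C := by
  have hC₀ : 0 ≤ C := (norm_nonneg _).trans (hC 0 0 le_rfl le_rfl zero_le_one)
  have hprim : ∀ H : ℝ → ℝ → E, Continuous (Function.uncurry H) →
      Continuous fun s => ∫ r in (0 : ℝ)..s, H s r := fun H hH =>
    continuous_parametric_intervalIntegral_of_continuous hH continuous_id
  rw [← integral_sub ((hprim F hF).intervalIntegrable _ _) ((hprim G hG).intervalIntegrable _ _)]
  refine (norm_integral_le_of_norm_le_const (C := C) fun s hs => ?_).trans_eq (by simp)
  rw [uIoc_of_le zero_le_one] at hs
  rw [← integral_sub ((hF.uncurry_left s).intervalIntegrable _ _)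
    ((hG.uncurry_left s).intervalIntegrable _ _)]
  refine (norm_integral_le_of_norm_le_const (C := C) fun r hr => ?_).trans ?_
  · rw [uIoc_of_le hs.1.le] at hr
    exact hC s r hr.1.le hr.2 hs.2
  · rw [sub_zero, abs_of_pos hs.1]
    exact mul_le_of_le_one_right hC₀ hs.2

section BanachAlgebra

variable {𝔸 : Type*} [NormedRing 𝔸] [NormedAlgebra ℝ 𝔸] [CompleteSpace 𝔸]

@[fun_prop]
theorem continuous_exp_of_normedAlgebra_real : Continuous (exp : 𝔸 → 𝔸) :=
  let _ : NormedAlgebra ℚ 𝔸 := NormedAlgebra.restrictScalars ℚ ℝ 𝔸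
  exp_continuous

theorem exp_smul_mul_exp_smul (A : 𝔸) (s t : ℝ) :
    exp (s • A) * exp (t • A) = exp ((s + t) • A) := by
  let _ : NormedAlgebra ℚ 𝔸 := NormedAlgebra.restrictScalars ℚ ℝ 𝔸
  rw [add_smul, exp_add_of_commute (((Commute.refl A).smul_left s).smul_right t)]

theorem hasDerivAt_exp_neg_smul_mul_exp_smul_add (A B : 𝔸) (r : ℝ) :
    HasDerivAt (fun u : ℝ => exp ((-u) • A) * exp (u • (A + B)))
      (exp ((-r) • A) * B * exp (r • (A + B))) r := by
  have hneg : HasDerivAt (fun u : ℝ => exp ((-u) • A)) (-(exp ((-r) • A) * A)) r := by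
    simpa [Function.comp_def] using
      (hasDerivAt_exp_smul_const (𝕂 := ℝ) A (-r)).scomp r (hasDerivAt_neg r)
  refine (hneg.mul (hasDerivAt_exp_smul_const' (𝕂 := ℝ) (A + B) r)).congr_deriv ?_
  noncomm_ring

theorem exp_neg_smul_mul_exp_smul_add (A B : 𝔸) (s : ℝ) :
    exp ((-s) • A) * exp (s • (A + B)) =
      1 + ∫ r in (0 : ℝ)..s, exp ((-r) • A) * B * exp (r • (A + B)) := by
  rw [integral_eq_sub_of_hasDerivAt (fun r _ => hasDerivAt_exp_neg_smul_mul_exp_smul_add A B r)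
    ((by fun_prop : Continuous _).intervalIntegrable _ _)]
  simp

theorem exp_smul_add_eq_exp_smul_mul (A B : 𝔸) (s : ℝ) :
    exp (s • (A + B)) =
      exp (s • A) * (1 + ∫ r in (0 : ℝ)..s, exp ((-r) • A) * B * exp (r • (A + B))) := by
  rw [← exp_neg_smul_mul_exp_smul_add, ← mul_assoc, exp_smul_mul_exp_smul, add_neg_cancel,
    zero_smul, exp_zero, one_mul]

theorem exp_add_eq_second_order_duhamel (A B : 𝔸) :
    exp (A + B) = exp A * (1 + (∫ s in (0 : ℝ)..1, exp ((-s) • A) * B * exp (s • A)) +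
      ∫ s in (0 : ℝ)..1, ∫ r in (0 : ℝ)..s,
        exp ((-s) • A) * B * exp ((s - r) • A) * B * exp (r • (A + B))) := by
  have expand : ∀ s : ℝ, exp ((-s) • A) * B * exp (s • (A + B)) =
      exp ((-s) • A) * B * exp (s • A) + ∫ r in (0 : ℝ)..s,
        exp ((-s) • A) * B * exp ((s - r) • A) * B * exp (r • (A + B)) := by
    intro s
    have hint : IntervalIntegrable (fun r : ℝ => exp ((-r) • A) * B * exp (r • (A + B)))
        MeasureTheory.volume 0 s :=
      Continuous.intervalIntegrable (by fun_prop) _ _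
    have hmul := (ContinuousLinearMap.mul ℝ 𝔸
      (exp ((-s) • A) * B * exp (s • A))).intervalIntegral_comp_comm hint
    simp only [ContinuousLinearMap.mul_apply'] at hmul
    rw [exp_smul_add_eq_exp_smul_mul A B s, mul_add, mul_one, mul_add, ← mul_assoc, ← hmul]
    congr 1
    refine integral_congr fun r _ => ?_
    simp only [sub_eq_add_neg, ← exp_smul_mul_exp_smul, mul_assoc]
  have hcont : Continuous fun s : ℝ => ∫ r in (0 : ℝ)..s,
      exp ((-s) • A) * B * exp ((s - r) • A) * B * exp (r • (A + B)) :=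
    continuous_parametric_intervalIntegral_of_continuous (by fun_prop) continuous_id
  have h := exp_smul_add_eq_exp_smul_mul A B 1
  rw [one_smul, one_smul] at h
  rw [h, add_assoc, funext expand,
    integral_add (Continuous.intervalIntegrable (by fun_prop) _ _) (hcont.intervalIntegrable _ _)]

theorem norm_exp_smul_add_sub_exp_smul_le (A B : 𝔸) {M : ℝ}
    (hA : ∀ t ∈ Icc (-1 : ℝ) 1, ‖exp (t • A)‖ ≤ M)
    (hAB : ∀ t ∈ Icc (0 : ℝ) 1, ‖exp (t • (A + B))‖ ≤ M) {s : ℝ} (hs : s ∈ Icc (0 : ℝ) 1) :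
    ‖exp (s • (A + B)) - exp (s • A)‖ ≤ M ^ 3 * ‖B‖ := by
  have hint : ‖∫ r in (0 : ℝ)..s, exp ((-r) • A) * B * exp (r • (A + B))‖ ≤
      M * ‖B‖ * M * |s - 0| := by
    refine norm_integral_le_of_norm_le_const fun r hr => ?_
    rw [uIoc_of_le hs.1] at hr
    refine norm_mul_le_of_le (norm_mul_le_of_le (hA _ ?_) le_rfl) (hAB r ?_) <;>
      constructor <;> linarith [hr.1, hr.2, hs.2]
  calc ‖exp (s • (A + B)) - exp (s • A)‖
      = ‖exp (s • A) * ∫ r in (0 : ℝ)..s, exp ((-r) • A) * B * exp (r • (A + B))‖ := by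
        rw [exp_smul_add_eq_exp_smul_mul A B s, mul_add, mul_one, add_sub_cancel_left]
    _ ≤ M * (M * ‖B‖ * M * |s - 0|) := norm_mul_le_of_le (hA s ⟨by linarith [hs.1], hs.2⟩) hint
    _ ≤ M * (M * ‖B‖ * M * 1) := by
        have hM : 0 ≤ M := (norm_nonneg _).trans (hA 0 (by norm_num))
        rw [sub_zero, abs_of_nonneg hs.1]
        gcongr
        exact hs.2
    _ = M ^ 3 * ‖B‖ := by ring

theorem norm_duhamel_integrand_sub_le (A B B₀ : 𝔸) {M : ℝ}
    (hA : ∀ t ∈ Icc (-1 : ℝ) 1, ‖exp (t • A)‖ ≤ M)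
    (hAB : ∀ t ∈ Icc (0 : ℝ) 1, ‖exp (t • (A + B))‖ ≤ M) {s r : ℝ} (hr : 0 ≤ r) (hrs : r ≤ s)
    (hs : s ≤ 1) :
    ‖exp ((-s) • A) * B * exp ((s - r) • A) * B * exp (r • (A + B)) -
        exp ((-s) • A) * B₀ * exp ((s - r) • A) * B₀ * exp (r • A)‖ ≤
      M ^ 3 * (‖B - B₀‖ * (‖B‖ + ‖B₀‖) + M ^ 2 * ‖B₀‖ ^ 2 * ‖B‖) := by
  set E₁ := exp ((-s) • A)
  set E₂ := exp ((s - r) • A)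
  set E₃ := exp (r • (A + B))
  have h₁ : ‖E₁‖ ≤ M := hA _ ⟨by linarith, by linarith⟩
  have h₂ : ‖E₂‖ ≤ M := hA _ ⟨by linarith, by linarith⟩
  have h₃ : ‖E₃‖ ≤ M := hAB _ ⟨hr, hrs.trans hs⟩
  have h₄ := norm_exp_smul_add_sub_exp_smul_le A B hA hAB ⟨hr, hrs.trans hs⟩
  calc _ = ‖E₁ * (B - B₀) * E₂ * B * E₃ + E₁ * B₀ * E₂ * (B - B₀) * E₃ +
        E₁ * B₀ * E₂ * B₀ * (E₃ - exp (r • A))‖ := by congr 1; noncomm_ring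
    _ ≤ M * ‖B - B₀‖ * M * ‖B‖ * M + M * ‖B₀‖ * M * ‖B - B₀‖ * M +
        M * ‖B₀‖ * M * ‖B₀‖ * (M ^ 3 * ‖B‖) := by
      refine norm_add₃_le.trans (add_le_add (add_le_add ?_ ?_) ?_) <;>
        refine norm_mul_le_of_le (norm_mul_le_of_le (norm_mul_le_of_le
          (norm_mul_le_of_le ?_ le_rfl) ?_) le_rfl) ?_ <;> assumption
    _ = M ^ 3 * (‖B - B₀‖ * (‖B‖ + ‖B₀‖) + M ^ 2 * ‖B₀‖ ^ 2 * ‖B‖) := by ring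

theorem exists_norm_exp_perturbation_sub_le (A Y Z : 𝔸) :
    ∃ C, ∀ ε ∈ Icc (0 : ℝ) 1,
      ‖exp (A + ε • Y + ε ^ 2 • Z) -
        exp A * (1 + ε • (∫ s in (0 : ℝ)..1, exp ((-s) • A) * Y * exp (s • A)) +
          ε ^ 2 • ((∫ s in (0 : ℝ)..1, exp ((-s) • A) * Z * exp (s • A)) +
            ∫ s in (0 : ℝ)..1, ∫ r in (0 : ℝ)..s,
              exp ((-s) • A) * Y * exp ((s - r) • A) * Y * exp (r • A)))‖ ≤ C * ε ^ 3 := by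
  obtain ⟨M, hM⟩ := (isCompact_Icc.prod isCompact_Icc).exists_bound_of_continuousOn
    (s := Icc (-1 : ℝ) 1 ×ˢ Icc (0 : ℝ) 1)
    (f := fun p : ℝ × ℝ => exp (p.1 • (A + (p.2 • Y + p.2 ^ 2 • Z)))) (by fun_prop)
  have hM₀ : 0 ≤ M := (norm_nonneg _).trans (hM (0, 0) ⟨by norm_num, by norm_num⟩)
  set K := ‖Y‖ + ‖Z‖
  refine ⟨M * M ^ 3 * ((2 + M ^ 2 * K) * K ^ 2), fun ε hε => ?_⟩
  set B := ε • Y + ε ^ 2 • Z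
  have hA : ∀ t ∈ Icc (-1 : ℝ) 1, ‖exp (t • A)‖ ≤ M := fun t ht => by
    simpa using hM (t, 0) ⟨ht, by norm_num⟩
  have hAB : ∀ t ∈ Icc (0 : ℝ) 1, ‖exp (t • (A + B))‖ ≤ M := fun t ht =>
    hM (t, ε) ⟨⟨by linarith [ht.1], ht.2⟩, hε⟩
  have hφ : ∫ s in (0 : ℝ)..1, exp ((-s) • A) * B * exp (s • A) =
      ε • (∫ s in (0 : ℝ)..1, exp ((-s) • A) * Y * exp (s • A)) +
        ε ^ 2 • ∫ s in (0 : ℝ)..1, exp ((-s) • A) * Z * exp (s • A) := by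
    simp only [B, mul_add, add_mul, mul_smul_comm, smul_mul_assoc]
    rw [integral_add, integral_smul, integral_smul] <;>
      exact Continuous.intervalIntegrable (by fun_prop) _ _
  have hψ : ε ^ 2 • (∫ s in (0 : ℝ)..1, ∫ r in (0 : ℝ)..s,
        exp ((-s) • A) * Y * exp ((s - r) • A) * Y * exp (r • A)) =
      ∫ s in (0 : ℝ)..1, ∫ r in (0 : ℝ)..s,
        exp ((-s) • A) * (ε • Y) * exp ((s - r) • A) * (ε • Y) * exp (r • A) := by
    simp only [mul_smul_comm, smul_mul_assoc, smul_smul, integral_smul, pow_two]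
  have hY : ‖ε • Y‖ = ε * ‖Y‖ := by rw [norm_smul, Real.norm_of_nonneg hε.1]
  have hZ : ‖ε ^ 2 • Z‖ = ε ^ 2 * ‖Z‖ := by rw [norm_smul, Real.norm_of_nonneg (by positivity)]
  have hB₀ : ‖ε • Y‖ ≤ ε * K := by
    rw [hY]; nlinarith [norm_nonneg Z, hε.1]
  have hBB₀ : ‖B - ε • Y‖ ≤ ε ^ 2 * K := by
    rw [add_sub_cancel_left, hZ]; nlinarith [norm_nonneg Y, sq_nonneg ε]
  have hB : ‖B‖ ≤ ε * K := by
    refine (norm_add_le _ _).trans ?_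
    rw [hY, hZ]; nlinarith [norm_nonneg Z, hε.1, hε.2]
  have hdiff := norm_integral_integral_sub_le (by fun_prop) (by fun_prop)
    fun s r hr hrs hs => norm_duhamel_integrand_sub_le A B (ε • Y) hA hAB hr hrs hs
  rw [add_assoc A, exp_add_eq_second_order_duhamel, hφ, smul_add, hψ, ← mul_sub,
    show ∀ a b c e : 𝔸, 1 + (a + b) + c - (1 + a + (b + e)) = c - e from
      fun a b c e => by abel]
  calc _ ≤ M * (M ^ 3 * (‖B - ε • Y‖ * (‖B‖ + ‖ε • Y‖) + M ^ 2 * ‖ε • Y‖ ^ 2 * ‖B‖)) :=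
        norm_mul_le_of_le (by simpa using hA 1 (by norm_num)) hdiff
    _ ≤ M * (M ^ 3 * (ε ^ 2 * K * (ε * K + ε * K) + M ^ 2 * (ε * K) ^ 2 * (ε * K))) := by
        gcongr
    _ = M * M ^ 3 * ((2 + M ^ 2 * K) * K ^ 2) * ε ^ 3 := by ring

end BanachAlgebra

/-- For `X Y Z : M_d(ℂ)`, as `ε → 0`,
`exp(X + εY + ε²Z) = e^X (I + ε φ_X(Y) + ε² (φ_X(Z) + ψ_X(Y))) + O(ε³)`. -/
theorem exp_perturbation_expansion {d : ℕ} (X Y Z : Matrix (Fin d) (Fin d) ℂ) :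
    ∃ C > 0, ∃ δ > 0, ∀ ε : ℝ, 0 < ε → ε < δ →
      ‖exp (X + (ε : ℂ) • Y + ((ε : ℂ) ^ 2) • Z) -
          exp X *
            (1 + (ε : ℂ) • (∫ s in (0:ℝ)..1, exp ((-s : ℝ) • X) * Y * exp ((s : ℝ) • X)) +
              ((ε : ℂ) ^ 2) •
                ((∫ s in (0:ℝ)..1, exp ((-s : ℝ) • X) * Z * exp ((s : ℝ) • X)) +
                  (∫ s in (0:ℝ)..1, ∫ r in (0:ℝ)..s,
                    exp ((-s : ℝ) • X) * Y * exp (((s - r : ℝ)) • X) * Y *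
                      exp ((r : ℝ) • X))))‖ ≤ C * ε ^ 3 := by
  obtain ⟨C, hC⟩ := exists_norm_exp_perturbation_sub_le X Y Z
  refine ⟨max C 1, by positivity, 1, one_pos, fun ε hε hε₁ => ?_⟩
  simp only [← Complex.ofReal_pow, Complex.coe_smul]
  exact (hC ε ⟨hε.le, hε₁.le⟩).trans (by gcongr; exact le_max_left C 1)
end

section
/- Let D be a d×d Hermitian matrix with eigenvalues λ₁, …, λ_d (with multiplicity) such that for all k ≠ l, λ_k − λ_l ∉ 2πℤ \ {0}. Then the linear map φ_{iD} : M_d(ℂ) → M_d(ℂ) defined by φ_{iD}(Y) = ∫₀¹ e^{-isD} Y e^{isD} ds is bijective. -/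
open scoped Matrix
open NormedSpace intervalIntegral Complex

attribute [local instance] Matrix.linftyOpNormedRing Matrix.linftyOpNormedAlgebra

/-!
Write `D = U Λ U*` with `U` unitary and `Λ = diag(λ₁, …, λ_d)`. Conjugation by `U` turns
`φ_{iD}` into the Hadamard (Schur) multiplier by `c_{kl} = ∫₀¹ e^{is(λ_l - λ_k)} ds`, which is `1`
if `λ_k = λ_l` and `(e^{it} - 1)/(it)` with `t = λ_l - λ_k` otherwise. The gap hypothesis says
exactly that `e^{it} ≠ 1` in the second case, so all `c_{kl}` are nonzero and `φ_{iD}` is a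
composition of three bijections.
-/

open Matrix Unitary

theorem integral_exp_mul_ofReal_mul_I_ne_zero {t : ℝ}
    (ht : ∀ m : ℤ, m ≠ 0 → t ≠ 2 * Real.pi * m) :
    ∫ s in (0:ℝ)..1, cexp (s * t * I) ≠ 0 := by
  rcases eq_or_ne t 0 with rfl | ht0
  · simp
  have hc : (t : ℂ) * I ≠ 0 := by simp [ht0]
  simp_rw [mul_assoc, mul_comm (_ : ℂ) ((t : ℂ) * I)]
  rw [integral_exp_mul_complex hc]
  refine div_ne_zero (fun h => ?_) hc
  obtain ⟨m, hm⟩ := Complex.exp_eq_one_iff.mp (by simpa [sub_eq_zero] using h)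
  have htm : t = 2 * Real.pi * m := by
    have := congrArg (fun z => z / I) hm
    field_simp at this
    exact_mod_cast (by linear_combination this : (t : ℂ) = 2 * Real.pi * m)
  exact ht m (by rintro rfl; simp [ht0] at htm) htm

theorem Matrix.diagonal_mul_mul_diagonal {n α : Type*} [Fintype n] [DecidableEq n]
    [CommSemiring α] (a b : n → α) (Z : Matrix n n α) :
    diagonal a * Z * diagonal b = of (fun i j => a i * b j) ⊙ Z := by
  ext i j
  simp [mul_comm, mul_left_comm]

theorem Matrix.bijective_hadamard_of_ne_zero {m n K : Type*} [Field K] {C : Matrix m n K}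
    (hC : ∀ i j, C i j ≠ 0) : Function.Bijective fun Z : Matrix m n K => C ⊙ Z := by
  refine Function.bijective_iff_has_inverse.mpr
    ⟨fun Z => (of fun i j => (C i j)⁻¹) ⊙ Z, fun Z => ?_, fun Z => ?_⟩ <;> ext i j <;> simp [hC]

theorem Matrix.continuous_of_hadamard {m n α X : Type*} [TopologicalSpace α] [Mul α]
    [ContinuousMul α] [TopologicalSpace X] {f : m → n → X → α} (hf : ∀ i j, Continuous (f i j))
    (Z : Matrix m n α) : Continuous fun s => of (fun i j => f i j s) ⊙ Z :=
  continuous_pi fun i => continuous_pi fun j => (hf i j).mul continuous_const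

variable {n : Type*} [Fintype n] [DecidableEq n]

theorem Matrix.exp_conjStarAlgAut (u : unitary (Matrix n n ℂ)) (A : Matrix n n ℂ) :
    NormedSpace.exp (conjStarAlgAut ℂ _ u A) = conjStarAlgAut ℂ _ u (NormedSpace.exp A) := by
  have hinv : (u : Matrix n n ℂ)⁻¹ = star (u : Matrix n n ℂ) :=
    inv_eq_left_inv (Unitary.coe_star_mul_self u)
  simpa [hinv] using Matrix.exp_conj (u : Matrix n n ℂ) A (Unitary.toUnits u).isUnit

theorem Matrix.IsHermitian.exp_smul {D : Matrix n n ℂ} (hD : D.IsHermitian) (z : ℂ) :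
    NormedSpace.exp (z • D) = conjStarAlgAut ℂ _ hD.eigenvectorUnitary
      (diagonal fun k => cexp (z * hD.eigenvalues k)) := by
  conv_lhs => rw [hD.spectral_theorem]
  rw [← map_smul, exp_conjStarAlgAut, ← diagonal_smul, exp_diagonal]
  congr
  ext k
  simp [Complex.exp_eq_exp_ℂ]

theorem Matrix.intervalIntegral_apply {𝕜 : Type*} [RCLike 𝕜] {F : ℝ → Matrix n n 𝕜}
    (hF : Continuous F) (a b : ℝ) (i j : n) : (∫ s in a..b, F s) i j = ∫ s in a..b, F s i j :=
  ((entryLinearMap 𝕜 𝕜 i j).toContinuousLinearMap.intervalIntegral_comp_comm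
    (hF.intervalIntegrable a b)).symm

theorem Matrix.intervalIntegral_of_hadamard {𝕜 : Type*} [RCLike 𝕜] {f : n → n → ℝ → 𝕜}
    (hf : ∀ i j, Continuous (f i j)) (Z : Matrix n n 𝕜) (a b : ℝ) :
    ∫ s in a..b, of (fun i j => f i j s) ⊙ Z = of (fun i j => ∫ s in a..b, f i j s) ⊙ Z := by
  ext i j
  rw [intervalIntegral_apply (continuous_of_hadamard hf Z)]
  simp [intervalIntegral.integral_mul_const]

theorem Matrix.IsHermitian.exp_mul_mul_exp_eq_conj_hadamard {D : Matrix n n ℂ}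
    (hD : D.IsHermitian) (s : ℝ) (Y : Matrix n n ℂ) :
    NormedSpace.exp ((-(s : ℂ) * I) • D) * Y * NormedSpace.exp (((s : ℂ) * I) • D) =
      conjStarAlgAut ℂ _ hD.eigenvectorUnitary
        (of (fun k l => cexp (s * (hD.eigenvalues l - hD.eigenvalues k) * I)) ⊙
          (conjStarAlgAut ℂ _ hD.eigenvectorUnitary).symm Y) := by
  conv_lhs =>
    rw [hD.exp_smul, hD.exp_smul, ← (conjStarAlgAut ℂ _ hD.eigenvectorUnitary).apply_symm_apply Y]
  rw [← map_mul, ← map_mul, diagonal_mul_mul_diagonal]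
  congr 3
  ext k l
  rw [← Complex.exp_add]
  congr 1
  ring

theorem Matrix.IsHermitian.intervalIntegral_exp_mul_mul_exp {D : Matrix n n ℂ} (hD : D.IsHermitian)
    (a b : ℝ) (Y : Matrix n n ℂ) :
    ∫ s in a..b, NormedSpace.exp ((-(s : ℂ) * I) • D) * Y * NormedSpace.exp (((s : ℂ) * I) • D) =
      conjStarAlgAut ℂ _ hD.eigenvectorUnitary
        (of (fun k l => ∫ s in a..b, cexp (s * (hD.eigenvalues l - hD.eigenvalues k) * I)) ⊙
          (conjStarAlgAut ℂ _ hD.eigenvectorUnitary).symm Y) := by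
  let κ := (conjStarAlgAut ℂ _ hD.eigenvectorUnitary).toAlgEquiv.toLinearMap.toContinuousLinearMap
  simp_rw [hD.exp_mul_mul_exp_eq_conj_hadamard]
  have hcont : ∀ k l,
      Continuous fun s : ℝ => cexp (s * (hD.eigenvalues l - hD.eigenvalues k) * I) :=
    fun k l => by fun_prop
  rw [← intervalIntegral_of_hadamard hcont]
  exact κ.intervalIntegral_comp_comm ((continuous_of_hadamard hcont _).intervalIntegrable a b)

/-- If `D` is Hermitian with eigenvalues `λ₁,…,λ_d` such that for `k ≠ l`
`λ_k − λ_l ∉ 2πℤ \ {0}`, then `φ_{iD}(Y) = ∫₀¹ e^{-isD} Y e^{isD} ds` is bijective. -/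
theorem phi_iD_bijective {d : ℕ} (D : Matrix (Fin d) (Fin d) ℂ)
    (hD : D.IsHermitian)
    (hgap : ∀ k l : Fin d, k ≠ l → ∀ m : ℤ, m ≠ 0 →
      hD.eigenvalues k - hD.eigenvalues l ≠ 2 * Real.pi * m) :
    Function.Bijective (fun Y : Matrix (Fin d) (Fin d) ℂ =>
      ∫ s in (0:ℝ)..1,
        NormedSpace.exp ((-(s : ℂ) * Complex.I) • D) * Y * NormedSpace.exp (((s : ℂ) * Complex.I) • D)) := by
  let κ := conjStarAlgAut ℂ _ hD.eigenvectorUnitary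
  have hC : ∀ k l,
      ∫ s in (0:ℝ)..1, cexp (s * (hD.eigenvalues l - hD.eigenvalues k) * I) ≠ 0 := by
    intro k l
    refine mod_cast integral_exp_mul_ofReal_mul_I_ne_zero fun m hm => ?_
    rcases eq_or_ne l k with rfl | hlk
    · simp [hm, Real.pi_ne_zero]
    · exact hgap l k hlk m hm
  have hφ : (fun Y => ∫ s in (0:ℝ)..1,
      NormedSpace.exp ((-(s : ℂ) * I) • D) * Y * NormedSpace.exp (((s : ℂ) * I) • D)) =
      κ ∘ (fun Z => _ ⊙ Z) ∘ κ.symm :=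
    funext (hD.intervalIntegral_exp_mul_mul_exp 0 1)
  rw [hφ]
  exact κ.bijective.comp ((bijective_hadamard_of_ne_zero hC).comp κ.symm.bijective)
end
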